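/- arXiv:2002.04474 — 5 statements merged into one kernel-verified Lean document; each statement's English description precedes it below -/
import Mathlib

section
/- Let A : L²(Ω) → Y be a bounded linear operator between the real Hilbert space L²(Ω) (Ω a bounded domain in ℝ^d) and a Hilbert space Y, let y ∈ Y, and assume the set X̄ = {x ∈ L²₊(Ω) : Ax = y} of non-negative solutions is non-empty. If an element x* ∈ L²₊(Ω) satisfies r := A*(Ax* − y) ∈ L²₊(Ω) and ⟨x*, r⟩ = 0, then x* solves the operator equation, i.e. Ax* = y. -/
/-! With `r = A*(Ax* − y)` and `Ax₀ = y`, the adjoint identity gives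
`‖Ax* − y‖² = ⟪x* − x₀, r⟫ = ⟪x*, r⟫ − ⟪x₀, r⟫ = −⟪x₀, r⟫`, and `⟪x₀, r⟫ ≥ 0` because `x₀` and `r`
are both non-negative functions. -/

open MeasureTheory ContinuousLinearMap
open scoped RealInnerProductSpace

theorem MeasureTheory.L2.inner_nonneg {α : Type*} [MeasurableSpace α] {μ : Measure α}
    {f g : Lp ℝ 2 μ} (hf : 0 ≤ f) (hg : 0 ≤ g) : (0 : ℝ) ≤ ⟪f, g⟫ := by
  rw [L2.inner_def]
  apply integral_nonneg_of_ae
  filter_upwards [(Lp.coeFn_nonneg f).2 hf, (Lp.coeFn_nonneg g).2 hg] with a hfa hga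
  simpa using mul_nonneg hga hfa

section Residual

variable {E Y : Type*} [NormedAddCommGroup E] [InnerProductSpace ℝ E] [CompleteSpace E]
  [NormedAddCommGroup Y] [InnerProductSpace ℝ Y] [CompleteSpace Y]

theorem ContinuousLinearMap.norm_sub_sq_eq_inner_adjoint (A : E →L[ℝ] Y) (x x₀ : E) (y : Y)
    (hx₀ : A x₀ = y) : ‖A x - y‖ ^ 2 = ⟪x - x₀, adjoint A (A x - y)⟫ := by
  rw [real_inner_comm, adjoint_inner_left, map_sub, hx₀, real_inner_self_eq_norm_sq]

theorem ContinuousLinearMap.apply_eq_of_inner_adjoint_nonpos (A : E →L[ℝ] Y) {x x₀ : E} {y : Y}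
    (hx₀ : A x₀ = y) (h : ⟪x - x₀, adjoint A (A x - y)⟫ ≤ 0) : A x = y := by
  have hsq : ‖A x - y‖ ^ 2 = 0 :=
    le_antisymm (A.norm_sub_sq_eq_inner_adjoint x x₀ y hx₀ ▸ h) (sq_nonneg _)
  exact sub_eq_zero.mp (norm_eq_zero.mp (pow_eq_zero_iff two_ne_zero |>.mp hsq))

end Residual

theorem stmt_0_general
    {d : ℕ}
    (ν : Measure (EuclideanSpace ℝ (Fin d)))
    {Y : Type*} [NormedAddCommGroup Y] [InnerProductSpace ℝ Y] [CompleteSpace Y]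
    (A : Lp ℝ 2 ν →L[ℝ] Y) (y : Y)
    (hsol : ∃ x : Lp ℝ 2 ν, 0 ≤ x ∧ A x = y)
    (xstar : Lp ℝ 2 ν)
    (hr : 0 ≤ adjoint A (A xstar - y))
    (hortho : ⟪xstar, adjoint A (A xstar - y)⟫ = (0 : ℝ)) :
    A xstar = y := by
  obtain ⟨x₀, hx₀, hAx₀⟩ := hsol
  refine A.apply_eq_of_inner_adjoint_nonpos hAx₀ ?_
  rw [inner_sub_left, hortho, zero_sub, neg_nonpos]
  exact L2.inner_nonneg hx₀ hr

/-- **Lemma 1.** If `x* ∈ L²₊(Ω)` satisfies `r := A*(Ax* − y) ∈ L²₊(Ω)` and `⟨x*, r⟩ = 0`,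
and the set of non-negative solutions of `A x = y` is non-empty, then `A x* = y`. -/
theorem stmt_0
    {d : ℕ} (Ω : Set (EuclideanSpace ℝ (Fin d)))
    (hΩ_open : IsOpen Ω) (hΩ_bdd : Bornology.IsBounded Ω)
    (ν : Measure (EuclideanSpace ℝ (Fin d))) (hν : ν = volume.restrict Ω)
    {Y : Type*} [NormedAddCommGroup Y] [InnerProductSpace ℝ Y] [CompleteSpace Y]
    (A : Lp ℝ 2 ν →L[ℝ] Y) (y : Y)
    (hsol : ∃ x : Lp ℝ 2 ν, 0 ≤ x ∧ A x = y)
    (xstar : Lp ℝ 2 ν) (hxstar : 0 ≤ xstar)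
    (hr : 0 ≤ adjoint A (A xstar - y))
    (hortho : ⟪xstar, adjoint A (A xstar - y)⟫ = (0 : ℝ)) :
    A xstar = y :=
  stmt_0_general ν A y hsol xstar hr hortho
end

section
/- Let A : L²(Ω) → Y be a bounded linear operator between Hilbert spaces, y ∈ Y, and let G be the multiplication operator [Gx](t) = m(t)x(t) with m ∈ L^∞(Ω) satisfying 0 < m̲ ≤ m(t) ≤ m̄ < ∞ almost everywhere. If the set X̄ = {x ∈ L²₊(Ω) : Ax = y} is non-empty, then X̄ coincides with the solution set X̂ = {x ∈ L²(Ω) : (G + A*A)x = (G − A*A)|x| + 2A*y} of the fixed-point-type equation; in particular every solution of the fixed-point equation has vanishing negative part. -/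
/-!
Splitting `x = x⁺ - x⁻`, `|x| = x⁺ + x⁻` turns the fixed-point equation into
`A*(A x⁺ - y) = G x⁻`. Testing it against `x⁺ - x̄` for a non-negative solution `x̄` of `A x̄ = y`
gives `‖A x⁺ - y‖² = ⟨G x⁻, x⁺⟩ - ⟨G x⁻, x̄⟩ ≤ 0`, because `x⁻ x⁺ = 0` pointwise and `m > 0`.
Hence `A x⁺ = y`, so `G x⁻ = 0` and `x⁻ = 0`.
-/

open MeasureTheory ContinuousLinearMap
open scoped RealInnerProductSpace

section FixedPoint

variable {E : Type*} [AddCommGroup E] [Lattice E] [AddLeftMono E] [Module ℝ E]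
  [TopologicalSpace E] [IsTopologicalAddGroup E]

theorem fixedPoint_iff_posPart_negPart (G B : E →L[ℝ] E) (b x : E) :
    (G + B) x = (G - B) |x| + (2 : ℝ) • b ↔ B x⁺ - b = G x⁻ := by
  rw [← posPart_add_negPart x]
  nth_rewrite 1 [← posPart_sub_negPart x]
  simp only [add_apply, sub_apply, map_add, map_sub]
  constructor
  · intro h
    linear_combination (norm := module) (2⁻¹ : ℝ) • h
  · intro h
    linear_combination (norm := module) (2 : ℝ) • h

end FixedPoint

theorem apply_eq_of_adjoint_apply_sub_eq {E Y : Type*} [NormedAddCommGroup E]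
    [InnerProductSpace ℝ E] [CompleteSpace E] [NormedAddCommGroup Y] [InnerProductSpace ℝ Y]
    [CompleteSpace Y] (A : E →L[ℝ] Y) {p q g : E} {y : Y} (hq : A q = y)
    (hres : adjoint A (A p - y) = g) (hp : ⟪g, p⟫ = 0) (hgq : 0 ≤ ⟪g, q⟫) : A p = y := by
  have hnorm : ‖A p - y‖ ^ 2 = ⟪g, p⟫ - ⟪g, q⟫ := by
    rw [← real_inner_self_eq_norm_sq]
    calc ⟪A p - y, A p - y⟫ = ⟪A p - y, A (p - q)⟫ := by rw [map_sub, hq]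
      _ = ⟪g, p - q⟫ := by rw [← adjoint_inner_left, hres]
      _ = ⟪g, p⟫ - ⟪g, q⟫ := inner_sub_right _ _ _
  rw [← sub_eq_zero, ← norm_eq_zero]
  nlinarith [norm_nonneg (A p - y)]

section Lp

variable {α : Type*} [MeasurableSpace α] {μ : Measure α}

theorem Lp.ae_coeFn_posPart {p : ENNReal} (x : Lp ℝ p μ) : ⇑x⁺ =ᵐ[μ] fun t => (x t)⁺ := by
  filter_upwards [Lp.coeFn_sup x 0, Lp.coeFn_zero ℝ p μ] with t hsup hzero
  rw [posPart_def, hsup, Pi.sup_apply, hzero, Pi.zero_apply, posPart_def]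

theorem Lp.ae_coeFn_negPart {p : ENNReal} (x : Lp ℝ p μ) : ⇑x⁻ =ᵐ[μ] fun t => (x t)⁻ := by
  filter_upwards [Lp.ae_coeFn_posPart (-x), Lp.coeFn_neg x] with t hpos hneg
  rw [← posPart_neg, hpos, hneg, Pi.neg_apply, posPart_neg]

variable {m : α → ℝ} {G : Lp ℝ 2 μ →L[ℝ] Lp ℝ 2 μ}

variable (hG : ∀ x : Lp ℝ 2 μ, ⇑(G x) =ᵐ[μ] fun t => m t * x t)
include hG

theorem inner_mul_operator_eq_integral (u v : Lp ℝ 2 μ) :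
    ⟪G u, v⟫ = ∫ t, m t * u t * v t ∂μ := by
  rw [L2.inner_def]
  refine integral_congr_ae ?_
  filter_upwards [hG u] with t ht
  simp [ht, mul_comm]

theorem inner_mul_operator_negPart_posPart (x : Lp ℝ 2 μ) : ⟪G x⁻, x⁺⟫ = 0 := by
  rw [inner_mul_operator_eq_integral hG, ← integral_zero α ℝ]
  refine integral_congr_ae ?_
  filter_upwards [Lp.ae_coeFn_posPart x, Lp.ae_coeFn_negPart x] with t hpos hneg
  rcases le_total (x t) 0 with hx | hx <;> simp [hpos, hneg, hx]

theorem inner_mul_operator_nonneg (hm : ∀ᵐ t ∂μ, 0 ≤ m t) {u v : Lp ℝ 2 μ} (hu : 0 ≤ u)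
    (hv : 0 ≤ v) : 0 ≤ ⟪G u, v⟫ := by
  rw [inner_mul_operator_eq_integral hG]
  refine integral_nonneg_of_ae ?_
  filter_upwards [hm, (Lp.coeFn_nonneg u).2 hu, (Lp.coeFn_nonneg v).2 hv] with t hmt hut hvt
  exact mul_nonneg (mul_nonneg hmt hut) hvt

theorem eq_zero_of_mul_operator_eq_zero (hm : ∀ᵐ t ∂μ, m t ≠ 0) {u : Lp ℝ 2 μ} (hu : G u = 0) :
    u = 0 := by
  refine Lp.eq_zero_iff_ae_eq_zero.2 ?_
  filter_upwards [hG u, hm, Lp.coeFn_zero ℝ 2 μ] with t hGt hmt hzero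
  rw [hu, hzero] at hGt
  simpa [hmt] using hGt.symm

end Lp

theorem stmt_2_general
    {d : ℕ}
    (ν : Measure (EuclideanSpace ℝ (Fin d)))
    {Y : Type*} [NormedAddCommGroup Y] [InnerProductSpace ℝ Y] [CompleteSpace Y]
    (A : Lp ℝ 2 ν →L[ℝ] Y) (y : Y)
    (G : Lp ℝ 2 ν →L[ℝ] Lp ℝ 2 ν)
    (m : EuclideanSpace ℝ (Fin d) → ℝ) (mlo mhi : ℝ) (hmlo : 0 < mlo)
    (hm : ∀ᵐ t ∂ν, mlo ≤ m t ∧ m t ≤ mhi)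
    (hG : ∀ x : Lp ℝ 2 ν, ⇑(G x) =ᵐ[ν] fun t => m t * x t)
    (hsol : ∃ x : Lp ℝ 2 ν, 0 ≤ x ∧ A x = y) :
    {x : Lp ℝ 2 ν |
        (G + adjoint A ∘L A) x = (G - adjoint A ∘L A) (|x|) + (2 : ℝ) • adjoint A y}
      = {x : Lp ℝ 2 ν | 0 ≤ x ∧ A x = y} := by
  obtain ⟨q, hq, hAq⟩ := hsol
  have hm_pos : ∀ᵐ t ∂ν, 0 < m t := hm.mono fun t ht => hmlo.trans_le ht.1
  ext x
  rw [Set.mem_ofPred_eq, Set.mem_ofPred_eq, fixedPoint_iff_posPart_negPart, comp_apply, ← map_sub]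
  constructor
  · intro hres
    have hApos : A x⁺ = y := apply_eq_of_adjoint_apply_sub_eq A hAq hres
      (inner_mul_operator_negPart_posPart hG x)
      (inner_mul_operator_nonneg hG (hm_pos.mono fun _ => le_of_lt) (negPart_nonneg x) hq)
    have hneg : x⁻ = 0 := eq_zero_of_mul_operator_eq_zero hG (hm_pos.mono fun _ => ne_of_gt)
      (by rw [← hres, hApos, sub_self, map_zero])
    have hx : 0 ≤ x := negPart_eq_zero.1 hneg
    exact ⟨hx, by rwa [posPart_of_nonneg hx] at hApos⟩
  · rintro ⟨hx, hAx⟩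
    rw [posPart_of_nonneg hx, negPart_of_nonneg hx, hAx, sub_self, map_zero, map_zero]

/-- **Proposition 1.** For a multiplication-type strictly positive definite operator `G`,
the solution set of the fixed-point-type equation `(G + A*A)x = (G − A*A)|x| + 2A*y`
coincides with the set of non-negative solutions of `A x = y` (assumed non-empty);
in particular every solution of the fixed-point equation has vanishing negative part. -/
theorem stmt_2
    {d : ℕ} (Ω : Set (EuclideanSpace ℝ (Fin d)))
    (hΩ_open : IsOpen Ω) (hΩ_bdd : Bornology.IsBounded Ω)
    (ν : Measure (EuclideanSpace ℝ (Fin d))) (hν : ν = volume.restrict Ω)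
    {Y : Type*} [NormedAddCommGroup Y] [InnerProductSpace ℝ Y] [CompleteSpace Y]
    (A : Lp ℝ 2 ν →L[ℝ] Y) (y : Y)
    (G : Lp ℝ 2 ν →L[ℝ] Lp ℝ 2 ν)
    (m : EuclideanSpace ℝ (Fin d) → ℝ) (mlo mhi : ℝ) (hmlo : 0 < mlo)
    (hm : ∀ᵐ t ∂ν, mlo ≤ m t ∧ m t ≤ mhi)
    (hG : ∀ x : Lp ℝ 2 ν, ⇑(G x) =ᵐ[ν] fun t => m t * x t)
    (hsol : ∃ x : Lp ℝ 2 ν, 0 ≤ x ∧ A x = y) :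
    {x : Lp ℝ 2 ν |
        (G + adjoint A ∘L A) x = (G - adjoint A ∘L A) (|x|) + (2 : ℝ) • adjoint A y}
      = {x : Lp ℝ 2 ν | 0 ≤ x ∧ A x = y} :=
  stmt_2_general ν A y G m mlo mhi hmlo hm hG hsol
end

section
/- Let A, A_h : L²(Ω) → Y be compact bounded linear operators with ‖A_h − A‖ ≤ h, and let G be a strictly positive definite self-adjoint bounded linear operator on L²(Ω). Then there exist constants C₁(A,G) > 0 and h₀(A,G) > 0, depending only on A and G, such that for all h ∈ (0, h₀]: ‖(G + A_h*A_h)⁻¹(G − A_h*A_h) − (G + A*A)⁻¹(G − A*A)‖ ≤ C₁(A,G) h. -/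
/-!
Write `T = G + A*A` and `T_h = G + A_h*A_h`. Since `G - A*A = 2G - T`, the operator
`T⁻¹(G - A*A)` equals `2 T⁻¹ G - 1`, so the difference to be estimated is
`2 (T_h⁻¹ - T⁻¹) G = 2 T_h⁻¹ (A*A - A_h*A_h) T⁻¹ G`. Both inverses have norm at most `1/c` by the
coercivity `⟪x, T x⟫ ≥ c ‖x‖²` (Lax–Milgram), and `‖A_h*A_h - A*A‖ ≤ (‖A_h‖ + ‖A‖) h`.
-/

open MeasureTheory Filter Topology ContinuousLinearMap
open scoped RealInnerProductSpace

section Ring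

variable {R : Type*} [Ring R]

lemma Ring.inverse_add_mul_sub {g x : R} (hx : IsUnit (g + x)) :
    Ring.inverse (g + x) * (g - x) = 2 • (Ring.inverse (g + x) * g) - 1 := by
  have hgx : g - x = 2 • g - (g + x) := by abel
  rw [hgx, mul_sub, Ring.inverse_mul_cancel _ hx, mul_smul_comm]

lemma Ring.inverse_add_mul_sub_sub_inverse_add_mul_sub {g x y : R}
    (hx : IsUnit (g + x)) (hy : IsUnit (g + y)) :
    Ring.inverse (g + y) * (g - y) - Ring.inverse (g + x) * (g - x)
      = 2 • (Ring.inverse (g + y) * (x - y) * Ring.inverse (g + x) * g) := by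
  have hinv := Ring.inverse_sub_inverse (a := g + y) (b := g + x) ⟨fun _ => hx, fun _ => hy⟩
  rw [add_sub_add_left_eq_sub] at hinv
  rw [Ring.inverse_add_mul_sub hx, Ring.inverse_add_mul_sub hy, sub_sub_sub_cancel_right,
    ← smul_sub, ← sub_mul, hinv]

end Ring

namespace ContinuousLinearMap

section Coercive

variable {H : Type*} [NormedAddCommGroup H] [InnerProductSpace ℝ H] {c : ℝ} {T : H →L[ℝ] H}

lemma mul_norm_le_norm_apply_of_coercive (hT : ∀ x, c * ‖x‖ ^ 2 ≤ ⟪x, T x⟫) (x : H) :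
    c * ‖x‖ ≤ ‖T x‖ := by
  rcases (norm_nonneg x).eq_or_lt with hx | hx
  · simp [← hx]
  · refine le_of_mul_le_mul_right ?_ hx
    calc c * ‖x‖ * ‖x‖ = c * ‖x‖ ^ 2 := by ring
      _ ≤ ⟪x, T x⟫ := hT x
      _ ≤ ‖T x‖ * ‖x‖ := by rw [mul_comm]; exact real_inner_le_norm _ _

variable [CompleteSpace H]

lemma isUnit_of_coercive (hc : 0 < c) (hT : ∀ x, c * ‖x‖ ^ 2 ≤ ⟪x, T x⟫) : IsUnit T := by
  have hB : IsCoercive ((innerSL ℝ).comp T) :=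
    ⟨c, hc, fun u => by simpa [sq, mul_assoc, real_inner_comm] using hT u⟩
  have hT_eq : (hB.continuousLinearEquivOfBilin : H →L[ℝ] H) = T := by
    ext v
    refine ext_inner_right ℝ fun w => ?_
    simp
  rw [← hT_eq]
  exact ⟨hB.continuousLinearEquivOfBilin.toUnit, rfl⟩

lemma norm_inverse_le_of_coercive (hc : 0 < c) (hT : ∀ x, c * ‖x‖ ^ 2 ≤ ⟪x, T x⟫) :
    ‖Ring.inverse T‖ ≤ c⁻¹ := by
  refine opNorm_le_bound _ (inv_nonneg.2 hc.le) fun y => (le_inv_mul_iff₀ hc).2 ?_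
  have hy : T (Ring.inverse T y) = y :=
    congr($(Ring.mul_inverse_cancel _ (isUnit_of_coercive hc hT)) y)
  simpa only [hy] using mul_norm_le_norm_apply_of_coercive hT (Ring.inverse T y)

end Coercive

section Adjoint

variable {𝕜 E F : Type*} [RCLike 𝕜] [NormedAddCommGroup E] [InnerProductSpace 𝕜 E]
  [NormedAddCommGroup F] [InnerProductSpace 𝕜 F] [CompleteSpace E] [CompleteSpace F]

lemma norm_adjoint_comp_self_sub_le (A B : E →L[𝕜] F) :
    ‖adjoint B ∘L B - adjoint A ∘L A‖ ≤ (‖B‖ + ‖A‖) * ‖B - A‖ := by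
  have hsplit : adjoint B ∘L B - adjoint A ∘L A = adjoint B ∘L (B - A) + adjoint (B - A) ∘L A := by
    rw [map_sub, comp_sub, sub_comp]
    abel
  calc ‖adjoint B ∘L B - adjoint A ∘L A‖
      ≤ ‖adjoint B‖ * ‖B - A‖ + ‖adjoint (B - A)‖ * ‖A‖ := by
        rw [hsplit]
        exact (norm_add_le _ _).trans (add_le_add (opNorm_comp_le _ _) (opNorm_comp_le _ _))
    _ = (‖B‖ + ‖A‖) * ‖B - A‖ := by simp only [LinearIsometryEquiv.norm_map]; ring

end Adjoint

lemma coercive_add_adjoint_comp_self {H Y : Type*} [NormedAddCommGroup H] [InnerProductSpace ℝ H]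
    [CompleteSpace H] [NormedAddCommGroup Y] [InnerProductSpace ℝ Y] [CompleteSpace Y]
    {G : H →L[ℝ] H} {c : ℝ} (hG : ∀ x, c * ‖x‖ ^ 2 ≤ ⟪x, G x⟫) (B : H →L[ℝ] Y) (x : H) :
    c * ‖x‖ ^ 2 ≤ ⟪x, (G + adjoint B ∘L B) x⟫ := by
  rw [add_apply, inner_add_right, comp_apply, adjoint_inner_right]
  linarith [hG x, real_inner_self_nonneg (x := B x)]

end ContinuousLinearMap

theorem stmt_3_general
    {d : ℕ}
    (ν : Measure (EuclideanSpace ℝ (Fin d)))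
    {Y : Type*} [NormedAddCommGroup Y] [InnerProductSpace ℝ Y] [CompleteSpace Y]
    (A : Lp ℝ 2 ν →L[ℝ] Y)
    (G : Lp ℝ 2 ν →L[ℝ] Lp ℝ 2 ν)
    (c : ℝ) (hc : 0 < c) (hGpos : ∀ x : Lp ℝ 2 ν, c * ‖x‖ ^ 2 ≤ ⟪x, G x⟫) :
    ∃ C₁ > (0 : ℝ), ∃ h₀ > (0 : ℝ), ∀ h : ℝ, 0 < h → h ≤ h₀ →
      ∀ Ah : Lp ℝ 2 ν →L[ℝ] Y, IsCompactOperator ⇑Ah → ‖Ah - A‖ ≤ h →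
        ‖Ring.inverse (G + adjoint Ah ∘L Ah) ∘L (G - adjoint Ah ∘L Ah)
            - Ring.inverse (G + adjoint A ∘L A) ∘L (G - adjoint A ∘L A)‖ ≤ C₁ * h := by
  refine ⟨2 * (c⁻¹ * (2 * ‖A‖ + 1) * c⁻¹ * (‖G‖ + 1)), by positivity, 1, one_pos, ?_⟩
  intro h hh hh₁ Ah _ hAh
  have hcoer (B : Lp ℝ 2 ν →L[ℝ] Y) := coercive_add_adjoint_comp_self hGpos B
  have hAh_norm : ‖Ah‖ ≤ ‖A‖ + h := by linarith [norm_sub_norm_le Ah A]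
  have hD : ‖adjoint A ∘L A - adjoint Ah ∘L Ah‖ ≤ (2 * ‖A‖ + 1) * h := by
    rw [norm_sub_rev]
    calc _ ≤ (‖Ah‖ + ‖A‖) * ‖Ah - A‖ := norm_adjoint_comp_self_sub_le A Ah
      _ ≤ (2 * ‖A‖ + 1) * h := mul_le_mul (by linarith) hAh (norm_nonneg _) (by positivity)
  simp only [← mul_def]
  rw [Ring.inverse_add_mul_sub_sub_inverse_add_mul_sub (isUnit_of_coercive hc (hcoer A))
    (isUnit_of_coercive hc (hcoer Ah))]
  calc _ ≤ 2 * (‖Ring.inverse (G + adjoint Ah ∘L Ah)‖ * ‖adjoint A ∘L A - adjoint Ah ∘L Ah‖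
          * ‖Ring.inverse (G + adjoint A ∘L A)‖ * ‖G‖) := by
        refine norm_nsmul_le.trans ?_
        push_cast
        gcongr
        exact (norm_mul_le _ _).trans (mul_le_mul_of_nonneg_right norm_mul₃_le (norm_nonneg _))
    _ ≤ 2 * (c⁻¹ * ((2 * ‖A‖ + 1) * h) * c⁻¹ * (‖G‖ + 1)) := by
        gcongr
        · exact norm_inverse_le_of_coercive hc (hcoer Ah)
        · exact norm_inverse_le_of_coercive hc (hcoer A)
        · linarith
    _ = 2 * (c⁻¹ * (2 * ‖A‖ + 1) * c⁻¹ * (‖G‖ + 1)) * h := by ring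

/-- **Lemma 2, inequality (14).** There are constants `C₁(A,G) > 0` and `h₀(A,G) > 0`,
depending only on `A` and `G`, such that for all `h ∈ (0, h₀]` and every compact `A_h` with
`‖A_h − A‖ ≤ h` one has
`‖(G + A_h*A_h)⁻¹(G − A_h*A_h) − (G + A*A)⁻¹(G − A*A)‖ ≤ C₁(A,G) h`. -/
theorem stmt_3
    {d : ℕ} (Ω : Set (EuclideanSpace ℝ (Fin d)))
    (hΩ_open : IsOpen Ω) (hΩ_bdd : Bornology.IsBounded Ω)
    (ν : Measure (EuclideanSpace ℝ (Fin d))) (hν : ν = volume.restrict Ω)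
    {Y : Type*} [NormedAddCommGroup Y] [InnerProductSpace ℝ Y] [CompleteSpace Y]
    (A : Lp ℝ 2 ν →L[ℝ] Y) (hA : IsCompactOperator ⇑A)
    (G : Lp ℝ 2 ν →L[ℝ] Lp ℝ 2 ν) (hGsa : IsSelfAdjoint G)
    (c : ℝ) (hc : 0 < c) (hGpos : ∀ x : Lp ℝ 2 ν, c * ‖x‖ ^ 2 ≤ ⟪x, G x⟫) :
    ∃ C₁ > (0 : ℝ), ∃ h₀ > (0 : ℝ), ∀ h : ℝ, 0 < h → h ≤ h₀ →
      ∀ Ah : Lp ℝ 2 ν →L[ℝ] Y, IsCompactOperator ⇑Ah → ‖Ah - A‖ ≤ h →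
        ‖Ring.inverse (G + adjoint Ah ∘L Ah) ∘L (G - adjoint Ah ∘L Ah)
            - Ring.inverse (G + adjoint A ∘L A) ∘L (G - adjoint A ∘L A)‖ ≤ C₁ * h :=
  stmt_3_general ν A G c hc hGpos
end

section
/- Let A, A_h : L²(Ω) → Y be compact bounded linear operators with ‖A_h − A‖ ≤ h, let y^δ ∈ Y with ‖y^δ − y‖ ≤ δ, let the set X̄ = {x ∈ L²₊(Ω) : Ax = y} be non-empty with x̄ ∈ X̄, and let G = μI with μ > 0. Let (z^{h,δ}_k) and (z_k) be the sequences generated from the same starting element x₀ ∈ L²(Ω) by the iteration z_{k+1} = (G + B*B)⁻¹[(G − B*B)|z_k| + 2B* w] with (B,w) = (A_h, y^δ) and (B,w) = (A, y), respectively. Then there exist constants C₄ (depending only on A, G, x₀, x̄, y) and h₀ > 0 such that for all h ∈ (0, h₀] and all k: ‖z^{h,δ}_k − z_k‖ ≤ C₄(h + δ)k. -/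
open MeasureTheory ContinuousLinearMap
open scoped RealInnerProductSpace

/-!
Write `P = μ + B*B`, `Q = μ - B*B`. Since `Q = 2μ - P`, one step of the iteration is
`v ↦ 2 P⁻¹(μ v + B* w) - v`, and its linear part `P⁻¹Q` is nonexpansive because
`‖Q r‖ ≤ ‖P r‖` (the cross term `⟪μ r, B*B r⟫ = μ‖B r‖²` is nonnegative); composing with the
1-Lipschitz map `|·|` keeps the steps nonexpansive. A nonnegative solution `x̄` of `A x = y` is a
fixed point of the noise-free step, so the noise-free iterates stay in the ball of radius
`‖x₀ - x̄‖` around `x̄`. On that ball the noisy and the noise-free steps differ by `O(h + δ)`,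
by the resolvent identity `P⁻¹ - P'⁻¹ = P⁻¹ (P' - P) P'⁻¹` and `‖P⁻¹‖ ≤ μ⁻¹`; a nonexpansive
recursion accumulates these one-step defects at most linearly, giving `k · C₄ (h + δ)`.
-/

section Orbits

variable {E : Type*} [SeminormedAddCommGroup E]

theorem norm_orbit_sub_le_of_isFixedPt {T : E → E} (hT : ∀ u v, ‖T u - T v‖ ≤ ‖u - v‖)
    {x : E} (hx : Function.IsFixedPt T x) {z : ℕ → E} (hz : ∀ j, z (j + 1) = T (z j)) (j : ℕ) :
    ‖z j - x‖ ≤ ‖z 0 - x‖ := by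
  induction j with
  | zero => rfl
  | succ j ih => exact (hz j ▸ hx.eq ▸ hT (z j) x).trans ih

theorem norm_orbit_sub_orbit_le {S T : E → E} (hS : ∀ u v, ‖S u - S v‖ ≤ ‖u - v‖) {u v : ℕ → E}
    (hu : ∀ j, u (j + 1) = S (u j)) (hv : ∀ j, v (j + 1) = T (v j)) (h0 : u 0 = v 0) {ε : ℝ}
    (hε : ∀ j, ‖S (v j) - T (v j)‖ ≤ ε) (j : ℕ) : ‖u j - v j‖ ≤ ε * j := by
  induction j with
  | zero => simp [h0]
  | succ j ih =>
    calc ‖u (j + 1) - v (j + 1)‖ ≤ ‖S (u j) - S (v j)‖ + ‖S (v j) - T (v j)‖ := by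
          rw [hu, hv]; exact norm_sub_le_norm_sub_add_norm_sub _ _ _
      _ ≤ ε * j + ε := add_le_add ((hS _ _).trans ih) (hε j)
      _ = ε * (j + 1 : ℕ) := by push_cast; ring

end Orbits

theorem norm_sub_le_norm_add_of_inner_nonneg {E : Type*} [NormedAddCommGroup E]
    [InnerProductSpace ℝ E] {a b : E} (h : 0 ≤ ⟪a, b⟫) : ‖a - b‖ ≤ ‖a + b‖ := by
  rw [← sq_le_sq₀ (norm_nonneg _) (norm_nonneg _), norm_sub_sq_real, norm_add_sq_real]
  linarith

section Tikhonov

variable {H Y : Type*} [NormedAddCommGroup H] [InnerProductSpace ℝ H] [CompleteSpace H]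
  [NormedAddCommGroup Y] [InnerProductSpace ℝ Y] [CompleteSpace Y]

noncomputable def tikhonovOp (μ : ℝ) (B : H →L[ℝ] Y) : H →L[ℝ] H := μ • 1 + adjoint B ∘L B

/-- The argument `v` stands for `|z_k|` in the iteration `z_{k+1} = tikhonovStep μ B w |z_k|`. -/
noncomputable def tikhonovStep (μ : ℝ) (B : H →L[ℝ] Y) (w : Y) (v : H) : H :=
  Ring.inverse (tikhonovOp μ B) ((μ • (1 : H →L[ℝ] H) - adjoint B ∘L B) v + (2 : ℝ) • adjoint B w)

variable {μ : ℝ} (B : H →L[ℝ] Y)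

@[simp]
theorem tikhonovOp_apply (x : H) : tikhonovOp μ B x = μ • x + adjoint B (B x) := rfl

theorem inner_tikhonovOp_self (x : H) :
    ⟪tikhonovOp μ B x, x⟫ = μ * ‖x‖ * ‖x‖ + ‖B x‖ ^ 2 := by
  rw [tikhonovOp_apply, inner_add_left, real_inner_smul_left, adjoint_inner_left,
    real_inner_self_eq_norm_mul_norm, real_inner_self_eq_norm_sq, mul_assoc]

theorem mul_norm_le_norm_tikhonovOp_apply (x : H) :
    μ * ‖x‖ ≤ ‖tikhonovOp μ B x‖ := by
  rcases (norm_nonneg x).eq_or_lt with hx | hx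
  · simp [← hx]
  refine le_of_mul_le_mul_right ?_ hx
  calc μ * ‖x‖ * ‖x‖ ≤ ⟪tikhonovOp μ B x, x⟫ := by
        rw [inner_tikhonovOp_self]; exact le_add_of_nonneg_right (sq_nonneg _)
    _ ≤ ‖tikhonovOp μ B x‖ * ‖x‖ := real_inner_le_norm _ _

theorem isUnit_tikhonovOp (hμ : 0 < μ) : IsUnit (tikhonovOp μ B) := by
  have hc : IsCoercive ((innerSL ℝ).comp (tikhonovOp μ B)) :=
    ⟨μ, hμ, fun x => by
      rw [comp_apply, innerSL_apply_apply, inner_tikhonovOp_self]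
      exact le_add_of_nonneg_right (sq_nonneg _)⟩
  have he : (hc.continuousLinearEquivOfBilin : H →L[ℝ] H) = tikhonovOp μ B := by
    ext x; exact (hc.unique_continuousLinearEquivOfBilin fun _ => rfl).symm
  rw [← he]
  exact hc.continuousLinearEquivOfBilin.toUnit.isUnit

theorem tikhonovOp_apply_inverse (hμ : 0 < μ) (x : H) :
    tikhonovOp μ B (Ring.inverse (tikhonovOp μ B) x) = x := by
  rw [← mul_apply_eq_comp, Ring.mul_inverse_cancel _ (isUnit_tikhonovOp B hμ), one_apply_eq_self]

theorem inverse_tikhonovOp_apply (hμ : 0 < μ) (x : H) :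
    Ring.inverse (tikhonovOp μ B) (tikhonovOp μ B x) = x := by
  rw [← mul_apply_eq_comp, Ring.inverse_mul_cancel _ (isUnit_tikhonovOp B hμ), one_apply_eq_self]

theorem norm_inverse_tikhonovOp_le (hμ : 0 < μ) : ‖Ring.inverse (tikhonovOp μ B)‖ ≤ μ⁻¹ :=
  opNorm_le_bound _ (inv_nonneg.2 hμ.le) fun x => by
    have := mul_norm_le_norm_tikhonovOp_apply B (μ := μ) (Ring.inverse (tikhonovOp μ B) x)
    rwa [tikhonovOp_apply_inverse B hμ, ← le_div_iff₀' hμ, ← inv_mul_eq_div] at this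

theorem norm_adjoint_comp_self_sub_le (B' : H →L[ℝ] Y) :
    ‖adjoint B ∘L B - adjoint B' ∘L B'‖ ≤ (‖B‖ + ‖B'‖) * ‖B - B'‖ := by
  have hsplit : adjoint B ∘L B - adjoint B' ∘L B'
      = adjoint B ∘L (B - B') + adjoint (B - B') ∘L B' := by
    rw [map_sub, comp_sub, sub_comp]; abel
  calc _ ≤ ‖adjoint B‖ * ‖B - B'‖ + ‖adjoint (B - B')‖ * ‖B'‖ := by
        rw [hsplit]; exact norm_add_le_of_le (opNorm_comp_le _ _) (opNorm_comp_le _ _)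
    _ = (‖B‖ + ‖B'‖) * ‖B - B'‖ := by simp only [LinearIsometryEquiv.norm_map]; ring

theorem norm_inverse_tikhonovOp_sub_le (hμ : 0 < μ) (B' : H →L[ℝ] Y) :
    ‖Ring.inverse (tikhonovOp μ B) - Ring.inverse (tikhonovOp μ B')‖
      ≤ μ⁻¹ * ((‖B‖ + ‖B'‖) * ‖B - B'‖) * μ⁻¹ := by
  rw [Ring.inverse_sub_inverse (iff_of_true (isUnit_tikhonovOp B hμ) (isUnit_tikhonovOp B' hμ))]
  have hdiff : tikhonovOp μ B' - tikhonovOp μ B = -(adjoint B ∘L B - adjoint B' ∘L B') := by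
    simp only [tikhonovOp]; abel
  refine (norm_mul₃_le ..).trans ?_
  rw [hdiff, norm_neg]
  gcongr
  · exact norm_inverse_tikhonovOp_le B hμ
  · exact norm_adjoint_comp_self_sub_le B B'
  · exact norm_inverse_tikhonovOp_le B' hμ

theorem tikhonovStep_eq (hμ : 0 < μ) (w : Y) (v : H) :
    tikhonovStep μ B w v = (2 : ℝ) • Ring.inverse (tikhonovOp μ B) (μ • v + adjoint B w) - v := by
  have hrhs : (μ • (1 : H →L[ℝ] H) - adjoint B ∘L B) v + (2 : ℝ) • adjoint B w
      = (2 : ℝ) • (μ • v + adjoint B w) - tikhonovOp μ B v := by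
    simp only [tikhonovOp_apply, sub_apply, smul_apply, one_apply_eq_self, comp_apply]; module
  rw [tikhonovStep, hrhs, map_sub, map_smul, inverse_tikhonovOp_apply B hμ]

theorem tikhonovStep_eq_self (hμ : 0 < μ) {w : Y} {x : H} (hx : B x = w) :
    tikhonovStep μ B w x = x := by
  rw [tikhonovStep_eq B hμ, ← hx, ← tikhonovOp_apply, inverse_tikhonovOp_apply B hμ, two_smul,
    add_sub_cancel_right]

theorem norm_tikhonovStep_sub_tikhonovStep_le (hμ : 0 < μ) (w : Y) (u v : H) :
    ‖tikhonovStep μ B w u - tikhonovStep μ B w v‖ ≤ ‖u - v‖ := by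
  set r := Ring.inverse (tikhonovOp μ B) (u - v)
  have hstep : tikhonovStep μ B w u - tikhonovStep μ B w v = μ • r - adjoint B (B r) := by
    have hx : u - v = μ • r + adjoint B (B r) := by
      rw [← tikhonovOp_apply, tikhonovOp_apply_inverse B hμ]
    have hr : Ring.inverse (tikhonovOp μ B) (μ • u + adjoint B w)
        - Ring.inverse (tikhonovOp μ B) (μ • v + adjoint B w) = μ • r := by
      rw [← map_sub, ← map_smul, smul_sub, add_sub_add_right_eq_sub]
    rw [tikhonovStep_eq B hμ, tikhonovStep_eq B hμ]
    calc _ = (2 : ℝ) • (Ring.inverse (tikhonovOp μ B) (μ • u + adjoint B w)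
          - Ring.inverse (tikhonovOp μ B) (μ • v + adjoint B w)) - (u - v) := by module
      _ = μ • r - adjoint B (B r) := by rw [hr, hx]; module
  rw [hstep, ← tikhonovOp_apply_inverse B hμ (u - v), tikhonovOp_apply]
  refine norm_sub_le_norm_add_of_inner_nonneg ?_
  rw [real_inner_smul_left, adjoint_inner_right, real_inner_self_eq_norm_sq]
  positivity

theorem norm_adjoint_apply_sub_le (B' : H →L[ℝ] Y) (w w' : Y) :
    ‖adjoint B w - adjoint B' w'‖ ≤ ‖B‖ * ‖w - w'‖ + ‖B - B'‖ * ‖w'‖ := by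
  have hsplit : adjoint B w - adjoint B' w' = adjoint B (w - w') + adjoint (B - B') w' := by
    rw [map_sub, map_sub, sub_apply]; abel
  rw [hsplit, ← LinearIsometryEquiv.norm_map adjoint B,
    ← LinearIsometryEquiv.norm_map adjoint (B - B')]
  exact norm_add_le_of_le (le_opNorm _ _) (le_opNorm _ _)

theorem norm_tikhonovStep_sub_le (hμ : 0 < μ) (B' : H →L[ℝ] Y) (w w' : Y) (v : H) :
    ‖tikhonovStep μ B w v - tikhonovStep μ B' w' v‖
      ≤ 2 * (μ⁻¹ * ((‖B‖ + ‖B'‖) * ‖B - B'‖) * μ⁻¹ * (μ * ‖v‖ + ‖B'‖ * ‖w'‖)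
        + μ⁻¹ * (‖B‖ * ‖w - w'‖ + ‖B - B'‖ * ‖w'‖)) := by
  set R := Ring.inverse (tikhonovOp μ B)
  set R' := Ring.inverse (tikhonovOp μ B')
  have hsplit : tikhonovStep μ B w v - tikhonovStep μ B' w' v
      = (2 : ℝ) • ((R - R') (μ • v + adjoint B' w') + R (adjoint B w - adjoint B' w')) := by
    simp only [tikhonovStep_eq B hμ, tikhonovStep_eq B' hμ, sub_apply, map_add, map_sub]; module
  have hv : ‖μ • v + adjoint B' w'‖ ≤ μ * ‖v‖ + ‖B'‖ * ‖w'‖ := by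
    refine (norm_add_le _ _).trans (add_le_add ?_ ?_)
    · rw [norm_smul, Real.norm_of_nonneg hμ.le]
    · rw [← LinearIsometryEquiv.norm_map adjoint B']; exact le_opNorm _ _
  rw [hsplit, norm_smul, Real.norm_two]
  gcongr
  refine norm_add_le_of_le ((le_opNorm _ _).trans ?_) ((le_opNorm _ _).trans ?_)
  · gcongr
    · exact norm_inverse_tikhonovOp_sub_le B hμ B'
  · gcongr
    · exact norm_inverse_tikhonovOp_le B hμ
    · exact norm_adjoint_apply_sub_le B B' w w'

theorem exists_norm_tikhonovStep_sub_le (hμ : 0 < μ) (w : Y) {M : ℝ} (hM : 0 ≤ M) :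
    ∃ C > 0, ∀ (B' : H →L[ℝ] Y) (w' : Y) (h δ : ℝ), ‖B' - B‖ ≤ h → h ≤ 1 → 0 ≤ h →
      ‖w' - w‖ ≤ δ → 0 ≤ δ → ∀ v : H, ‖v‖ ≤ M →
        ‖tikhonovStep μ B' w' v - tikhonovStep μ B w v‖ ≤ C * (h + δ) := by
  have hμ' : 0 ≤ μ⁻¹ := inv_nonneg.2 hμ.le
  have hX : 0 ≤ μ⁻¹ * (2 * ‖B‖ + 1) * μ⁻¹ * (μ * M + ‖B‖ * ‖w‖) := by positivity
  refine ⟨2 * (μ⁻¹ * (2 * ‖B‖ + 1) * μ⁻¹ * (μ * M + ‖B‖ * ‖w‖) + μ⁻¹ * (‖B‖ + 1 + ‖w‖)),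
    by positivity, fun B' w' h δ hB h1 h0 hw hδ v hv => ?_⟩
  have hB' : ‖B'‖ ≤ ‖B‖ + 1 := by linarith [norm_le_norm_add_norm_sub' B' B]
  calc _ ≤ 2 * (μ⁻¹ * ((‖B‖ + 1 + ‖B‖) * h) * μ⁻¹ * (μ * M + ‖B‖ * ‖w‖)
        + μ⁻¹ * ((‖B‖ + 1) * δ + h * ‖w‖)) := by
        grw [norm_tikhonovStep_sub_le B' hμ B w' w, hB', hB, hv, hw]
    _ ≤ _ := by
        nlinarith [mul_nonneg hX hδ, mul_nonneg (mul_nonneg hμ' (by positivity : 0 ≤ ‖B‖ + 1)) h0,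
          mul_nonneg (mul_nonneg hμ' (norm_nonneg w)) hδ]

theorem norm_tikhonovStep_abs_sub_le [Lattice H] [HasSolidNorm H] [IsOrderedAddMonoid H]
    (hμ : 0 < μ) (w : Y) (u v : H) :
    ‖tikhonovStep μ B w |u| - tikhonovStep μ B w |v|‖ ≤ ‖u - v‖ :=
  (norm_tikhonovStep_sub_tikhonovStep_le B hμ w _ _).trans (norm_abs_sub_abs u v)

end Tikhonov

theorem stmt_7_general
    {d : ℕ}
    (ν : Measure (EuclideanSpace ℝ (Fin d)))
    {Y : Type*} [NormedAddCommGroup Y] [InnerProductSpace ℝ Y] [CompleteSpace Y]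
    (A : Lp ℝ 2 ν →L[ℝ] Y)
    (y : Y) (xbar : Lp ℝ 2 ν) (hxbar : 0 ≤ xbar) (hAxbar : A xbar = y)
    (μ₀ : ℝ) (hμ₀ : 0 < μ₀) (x₀ : Lp ℝ 2 ν) :
    ∃ C₄ > (0 : ℝ), ∃ h₀ > (0 : ℝ), ∀ h δ : ℝ, 0 < h → h ≤ h₀ → 0 ≤ δ →
      ∀ Ah : Lp ℝ 2 ν →L[ℝ] Y, IsCompactOperator ⇑Ah → ‖Ah - A‖ ≤ h →
      ∀ yδ : Y, ‖yδ - y‖ ≤ δ →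
      ∀ zn z : ℕ → Lp ℝ 2 ν, zn 0 = x₀ → z 0 = x₀ →
      (∀ j, zn (j + 1) =
        Ring.inverse (μ₀ • (1 : Lp ℝ 2 ν →L[ℝ] Lp ℝ 2 ν) + adjoint Ah ∘L Ah)
          ((μ₀ • (1 : Lp ℝ 2 ν →L[ℝ] Lp ℝ 2 ν) - adjoint Ah ∘L Ah) (|zn j|)
            + (2 : ℝ) • adjoint Ah yδ)) →
      (∀ j, z (j + 1) =
        Ring.inverse (μ₀ • (1 : Lp ℝ 2 ν →L[ℝ] Lp ℝ 2 ν) + adjoint A ∘L A)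
          ((μ₀ • (1 : Lp ℝ 2 ν →L[ℝ] Lp ℝ 2 ν) - adjoint A ∘L A) (|z j|)
            + (2 : ℝ) • adjoint A y)) →
      ∀ j : ℕ, ‖zn j - z j‖ ≤ C₄ * (h + δ) * (j : ℝ) := by
  obtain ⟨C, hC, hperturb⟩ :=
    exists_norm_tikhonovStep_sub_le A hμ₀ y (M := ‖xbar‖ + ‖x₀ - xbar‖) (by positivity)
  refine ⟨C, hC, 1, one_pos, ?_⟩
  intro h δ hh hh1 hδ Ah _ hAhA yδ hyδ zn z hzn0 hz0 hzn hz
  have hz' : ∀ j, z (j + 1) = tikhonovStep μ₀ A y |z j| := hz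
  have hzn' : ∀ j, zn (j + 1) = tikhonovStep μ₀ Ah yδ |zn j| := hzn
  have hfix : Function.IsFixedPt (fun x => tikhonovStep μ₀ A y |x|) xbar := by
    rw [Function.IsFixedPt, abs_of_nonneg hxbar]; exact tikhonovStep_eq_self A hμ₀ hAxbar
  have hbdd (j : ℕ) : ‖|z j|‖ ≤ ‖xbar‖ + ‖x₀ - xbar‖ := by
    have := norm_orbit_sub_le_of_isFixedPt (norm_tikhonovStep_abs_sub_le A hμ₀ y) hfix hz' j
    rw [hz0] at this
    rw [norm_abs_eq_norm]
    linarith [norm_le_norm_add_norm_sub' (z j) xbar]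
  exact norm_orbit_sub_orbit_le (T := fun x => tikhonovStep μ₀ A y |x|)
    (norm_tikhonovStep_abs_sub_le Ah hμ₀ yδ) hzn' hz' (hzn0.trans hz0.symm)
    (fun j => hperturb Ah yδ h δ hAhA hh1 hh.le hyδ hδ _ (hbdd j))

/-- **Proposition 2.** Stability estimate for Algorithm 1: the noisy and noise-free iterates
started from the same `x₀` satisfy `‖z^{h,δ}_k − z_k‖ ≤ C₄ (h + δ) k` for all `h ∈ (0, h₀]`,
with `C₄, h₀` depending only on `A`, `G = μI`, `x₀`, `x̄`, `y`. -/
theorem stmt_7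
    {d : ℕ} (Ω : Set (EuclideanSpace ℝ (Fin d)))
    (hΩ_open : IsOpen Ω) (hΩ_bdd : Bornology.IsBounded Ω)
    (ν : Measure (EuclideanSpace ℝ (Fin d))) (hν : ν = volume.restrict Ω)
    {Y : Type*} [NormedAddCommGroup Y] [InnerProductSpace ℝ Y] [CompleteSpace Y]
    (A : Lp ℝ 2 ν →L[ℝ] Y) (hA : IsCompactOperator ⇑A)
    (y : Y) (xbar : Lp ℝ 2 ν) (hxbar : 0 ≤ xbar) (hAxbar : A xbar = y)
    (μ₀ : ℝ) (hμ₀ : 0 < μ₀) (x₀ : Lp ℝ 2 ν) :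
    ∃ C₄ > (0 : ℝ), ∃ h₀ > (0 : ℝ), ∀ h δ : ℝ, 0 < h → h ≤ h₀ → 0 ≤ δ →
      ∀ Ah : Lp ℝ 2 ν →L[ℝ] Y, IsCompactOperator ⇑Ah → ‖Ah - A‖ ≤ h →
      ∀ yδ : Y, ‖yδ - y‖ ≤ δ →
      ∀ zn z : ℕ → Lp ℝ 2 ν, zn 0 = x₀ → z 0 = x₀ →
      (∀ j, zn (j + 1) =
        Ring.inverse (μ₀ • (1 : Lp ℝ 2 ν →L[ℝ] Lp ℝ 2 ν) + adjoint Ah ∘L Ah)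
          ((μ₀ • (1 : Lp ℝ 2 ν →L[ℝ] Lp ℝ 2 ν) - adjoint Ah ∘L Ah) (|zn j|)
            + (2 : ℝ) • adjoint Ah yδ)) →
      (∀ j, z (j + 1) =
        Ring.inverse (μ₀ • (1 : Lp ℝ 2 ν →L[ℝ] Lp ℝ 2 ν) + adjoint A ∘L A)
          ((μ₀ • (1 : Lp ℝ 2 ν →L[ℝ] Lp ℝ 2 ν) - adjoint A ∘L A) (|z j|)
            + (2 : ℝ) • adjoint A y)) →
      ∀ j : ℕ, ‖zn j - z j‖ ≤ C₄ * (h + δ) * (j : ℝ) :=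
  stmt_7_general ν A y xbar hxbar hAxbar μ₀ hμ₀ x₀
end

section
/- Let φ and ψ be index functions on (0, ‖A*A‖]. (i) If ψ is covered by φ and φ satisfies sup over λ ∈ (0, ‖A*A‖] of φ(λ)|g_k(λ)| ≤ γ φ(k⁻¹) for all k (with g_k(λ) = ((μ−λ)/(μ+λ))^k and some γ > 0), then ψ satisfies the analogous inequality sup over λ of ψ(λ)|g_k(λ)| ≤ γ' ψ(k⁻¹) with some γ' > 0. (ii) If the quotient function λ ↦ φ(λ)/ψ(λ) is increasing on (0, λ̄] for some λ̄ > 0, then ψ is covered by φ. (iii) If ψ is concave on (0, λ̄], then ψ is covered by φ(λ) = λ. -/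
open MeasureTheory Filter Topology ContinuousLinearMap
open scoped RealInnerProductSpace

/-- An index function: continuous, strictly increasing and positive on `(0,∞)`,
tending to `0` as `λ → 0+`. -/
def IsIndexFunction (φ : ℝ → ℝ) : Prop :=
  ContinuousOn φ (Set.Ioi 0) ∧ StrictMonoOn φ (Set.Ioi 0) ∧
    (∀ t : ℝ, 0 < t → 0 < φ t) ∧ Tendsto φ (nhdsWithin 0 (Set.Ioi 0)) (nhds 0)

/-- `ψ` is covered by `φ` on `(0, M]`: there is `c̲ > 0` with
`c̲ φ(α)/ψ(α) ≤ inf_{α ≤ λ ≤ M} φ(λ)/ψ(λ)` for all sufficiently small `α > 0`. -/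
def CoveredBy (M : ℝ) (ψ φ : ℝ → ℝ) : Prop :=
  ∃ c > (0 : ℝ), ∃ α₀ > (0 : ℝ), ∀ α : ℝ, 0 < α → α ≤ α₀ →
    ∀ lam : ℝ, α ≤ lam → lam ≤ M → c * (φ α / ψ α) ≤ φ lam / ψ lam

/-!
(i) Split at `λ = k⁻¹`. Below it, monotonicity of `ψ` and `|g_k| ≤ 1` give
`ψ(λ)|g_k(λ)| ≤ ψ(k⁻¹)`; above it, the covering inequality `ψ(λ) ≤ φ(λ) ψ(k⁻¹) / (c̲ φ(k⁻¹))`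
transfers the bound for `φ`. Only finitely many `k` have `k⁻¹` above the covering threshold,
and those are handled by `ψ(λ) ≤ ψ(M)`.

(ii) `φ/ψ` is continuous and positive, so on the compact interval `[λ̄, M]` it is bounded below by
a positive minimum, while on `(0, λ̄]` it is increasing.

(iii) For `0 < a ≤ b`, concavity between a point `ε ∈ (0, a)` and `b`, together with
`ψ(ε) > 0`, gives `(a - ε)/(b - ε) · ψ(b) ≤ ψ(a)`; letting `ε → 0` shows that `λ/ψ(λ)` is
increasing, so (ii) applies.
-/

open Set

lemma abs_sub_div_add_pow_le_one {μ lam : ℝ} (hμ : 0 < μ) (hlam : 0 ≤ lam) (k : ℕ) :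
    |((μ - lam) / (μ + lam)) ^ k| ≤ 1 := by
  rw [abs_pow]
  refine pow_le_one₀ (abs_nonneg _) ?_
  rw [abs_div, abs_of_pos (by linarith : 0 < μ + lam), div_le_one (by linarith), abs_le]
  constructor <;> linarith

lemma mul_le_div_mul_of_mul_div_le {c γ G φα ψα φl ψl : ℝ} (hc : 0 < c) (hφα : 0 < φα)
    (hψα : 0 < ψα) (hψl : 0 < ψl) (hG : 0 ≤ G) (hcov : c * (φα / ψα) ≤ φl / ψl)
    (hqual : φl * G ≤ γ * φα) :
    ψl * G ≤ γ / c * ψα := by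
  rw [mul_div_assoc', div_le_div_iff₀ hψα hψl] at hcov
  have h : φα * (c * (ψl * G)) ≤ φα * (γ * ψα) := by
    calc φα * (c * (ψl * G)) = c * φα * ψl * G := by ring
      _ ≤ φl * ψα * G := mul_le_mul_of_nonneg_right hcov hG
      _ = φl * G * ψα := by ring
      _ ≤ γ * φα * ψα := mul_le_mul_of_nonneg_right hqual hψα.le
      _ = φα * (γ * ψα) := by ring
  rw [div_mul_eq_mul_div, le_div_iff₀ hc, mul_comm]
  exact le_of_mul_le_mul_left h hφα

theorem CoveredBy.qualification {M : ℝ} {φ ψ : ℝ → ℝ} (hcov : CoveredBy M ψ φ)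
    (hφ : ∀ t, 0 < t → 0 < φ t) (hψ : ∀ t, 0 < t → 0 < ψ t) (hψm : MonotoneOn ψ (Ioi 0))
    {g : ℕ → ℝ → ℝ} (hg : ∀ k lam, 0 < lam → lam ≤ M → |g k lam| ≤ 1) {γ : ℝ}
    (hqual : ∀ k : ℕ, 1 ≤ k → ∀ lam, 0 < lam → lam ≤ M →
      φ lam * |g k lam| ≤ γ * φ (k : ℝ)⁻¹) :
    ∃ γ' > (0 : ℝ), ∀ k : ℕ, 1 ≤ k → ∀ lam, 0 < lam → lam ≤ M →
      ψ lam * |g k lam| ≤ γ' * ψ (k : ℝ)⁻¹ := by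
  obtain ⟨c, hc, α₀, hα₀, hcov⟩ := hcov
  set γ' := max (max 1 (γ / c)) (ψ M / ψ α₀)
  refine ⟨γ', lt_of_lt_of_le one_pos (le_max_of_le_left (le_max_left _ _)), ?_⟩
  intro k hk lam hlam hlamM
  set t : ℝ := (k : ℝ)⁻¹
  have ht : 0 < t := by positivity
  have hG : 0 ≤ |g k lam| := abs_nonneg _
  have hψG : ψ lam * |g k lam| ≤ ψ lam :=
    mul_le_of_le_one_right (hψ lam hlam).le (hg k lam hlam hlamM)
  rcases le_or_gt t α₀ with hsmall | hlarge
  · rcases le_or_gt lam t with hle | hlt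
    · calc ψ lam * |g k lam| ≤ ψ t := hψG.trans (hψm hlam ht hle)
        _ ≤ γ' * ψ t := le_mul_of_one_le_left (hψ t ht).le
            (le_max_of_le_left (le_max_left _ _))
    · calc ψ lam * |g k lam| ≤ γ / c * ψ t :=
            mul_le_div_mul_of_mul_div_le hc (hφ t ht) (hψ t ht) (hψ lam hlam) hG
              (hcov t ht hsmall lam hlt.le hlamM) (hqual k hk lam hlam hlamM)
        _ ≤ γ' * ψ t := mul_le_mul_of_nonneg_right
            (le_max_of_le_left (le_max_right _ _)) (hψ t ht).le
  · have hψα₀ := hψ α₀ hα₀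
    calc ψ lam * |g k lam| ≤ ψ M := hψG.trans (hψm hlam (hlam.trans_le hlamM) hlamM)
      _ = ψ M / ψ α₀ * ψ α₀ := (div_mul_cancel₀ _ hψα₀.ne').symm
      _ ≤ ψ M / ψ α₀ * ψ t := mul_le_mul_of_nonneg_left (hψm hα₀ ht hlarge.le)
          (div_nonneg (hψ M (hlam.trans_le hlamM)).le hψα₀.le)
      _ ≤ γ' * ψ t := mul_le_mul_of_nonneg_right (le_max_right _ _) (hψ t ht).le

theorem coveredBy_of_monotoneOn_div {M lbar : ℝ} {φ ψ : ℝ → ℝ} (hlbar : 0 < lbar)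
    (hcont : ContinuousOn (fun x => φ x / ψ x) (Ioi 0))
    (hpos : ∀ x, 0 < x → 0 < φ x / ψ x)
    (hmono : MonotoneOn (fun x => φ x / ψ x) (Ioc 0 lbar)) :
    CoveredBy M ψ φ := by
  set f := fun x => φ x / ψ x
  obtain ⟨x₀, hx₀, hmin⟩ := isCompact_Icc.exists_isMinOn
    (nonempty_Icc.mpr (le_max_left lbar M))
    (hcont.mono fun x hx => hlbar.trans_le hx.1)
  have hm : 0 < f x₀ := hpos x₀ (hlbar.trans_le hx₀.1)
  have hlbar' : 0 < f lbar := hpos lbar hlbar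
  refine ⟨min 1 (f x₀ / f lbar), lt_min one_pos (div_pos hm hlbar'), lbar, hlbar, ?_⟩
  intro α hα hαl lam hlam hlamM
  have hfα : 0 < f α := hpos α hα
  rcases le_or_gt lam lbar with hle | hlt
  · calc min 1 (f x₀ / f lbar) * f α ≤ f α :=
          mul_le_of_le_one_left hfα.le (min_le_left _ _)
      _ ≤ f lam := hmono ⟨hα, hαl⟩ ⟨hα.trans_le hlam, hle⟩ hlam
  · calc min 1 (f x₀ / f lbar) * f α ≤ f x₀ / f lbar * f lbar :=
          mul_le_mul (min_le_right _ _) (hmono ⟨hα, hαl⟩ ⟨hlbar, le_rfl⟩ hαl) hfα.le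
            (div_pos hm hlbar').le
      _ = f x₀ := div_mul_cancel₀ _ hlbar'.ne'
      _ ≤ f lam := hmin ⟨hlt.le, hlamM.trans (le_max_right _ _)⟩

lemma ConcaveOn.mul_apply_le_of_le {ψ : ℝ → ℝ} {l a b : ℝ}
    (hconc : ConcaveOn ℝ (Ioc 0 l) ψ) (hnonneg : ∀ x ∈ Ioc 0 l, 0 ≤ ψ x) (ha : 0 < a)
    (hb : b ≤ l) (hab : a ≤ b) :
    a * ψ b ≤ b * ψ a := by
  have hb0 : 0 < b := ha.trans_le hab
  have hchord : ∀ ε ∈ Ioo 0 a, (a - ε) / (b - ε) * ψ b ≤ ψ a := by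
    rintro ε ⟨hε, hεa⟩
    have hbε : 0 < b - ε := by linarith
    have hθ : 0 ≤ (b - a) / (b - ε) := div_nonneg (by linarith) hbε.le
    have hθ' : 0 ≤ (a - ε) / (b - ε) := div_nonneg (by linarith) hbε.le
    have hmid := hconc.2 ⟨hε, by linarith⟩ ⟨hb0, hb⟩ hθ hθ' (by field_simp; ring)
    have hpoint : ((b - a) / (b - ε)) • ε + ((a - ε) / (b - ε)) • b = a := by
      simp only [smul_eq_mul]; field_simp; ring
    rw [hpoint, smul_eq_mul, smul_eq_mul] at hmid
    nlinarith [mul_nonneg hθ (hnonneg ε ⟨hε, by linarith⟩)]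
  have hlim : Tendsto (fun ε => (a - ε) / (b - ε) * ψ b) (𝓝[>] 0) (𝓝 (a / b * ψ b)) := by
    have : ContinuousAt (fun ε => (a - ε) / (b - ε) * ψ b) 0 :=
      ((continuousAt_const.sub continuousAt_id).div (continuousAt_const.sub continuousAt_id)
        (by simpa using hb0.ne')).mul continuousAt_const
    simpa using this.tendsto.mono_left nhdsWithin_le_nhds
  have h := le_of_tendsto hlim (by
    filter_upwards [Ioo_mem_nhdsGT ha] with ε hε using hchord ε hε)
  rw [div_mul_eq_mul_div, div_le_iff₀ hb0] at h
  linarith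

lemma ConcaveOn.monotoneOn_div {ψ : ℝ → ℝ} {l : ℝ} (hconc : ConcaveOn ℝ (Ioc 0 l) ψ)
    (hpos : ∀ x ∈ Ioc 0 l, 0 < ψ x) :
    MonotoneOn (fun x => x / ψ x) (Ioc 0 l) := by
  intro a ha b hb hab
  rw [div_le_div_iff₀ (hpos a ha) (hpos b hb)]
  exact hconc.mul_apply_le_of_le (fun x hx => (hpos x hx).le) ha.1 hb.2 hab

/-- **Proposition 4.** (i) If `ψ` is covered by `φ` and `φ` satisfies the qualification
inequality for the filter `g_k(λ) = ((μ−λ)/(μ+λ))^k`, then so does `ψ`; (ii) if `φ/ψ` is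
increasing near `0`, then `ψ` is covered by `φ`; (iii) a concave index function is covered
by `φ(λ) = λ`. -/
theorem stmt_12
    {X Y : Type*} [NormedAddCommGroup X] [InnerProductSpace ℝ X] [CompleteSpace X]
    [NormedAddCommGroup Y] [InnerProductSpace ℝ Y] [CompleteSpace Y]
    (A : X →L[ℝ] Y) (μ₀ : ℝ) (hμ₀ : 0 < μ₀)
    (φ ψ : ℝ → ℝ) (hφ : IsIndexFunction φ) (hψ : IsIndexFunction ψ) :
    -- (i)
    (CoveredBy ‖adjoint A ∘L A‖ ψ φ →
      ∀ γ : ℝ, 0 < γ →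
      (∀ k : ℕ, 1 ≤ k → ∀ lam : ℝ, 0 < lam → lam ≤ ‖adjoint A ∘L A‖ →
        φ lam * |((μ₀ - lam) / (μ₀ + lam)) ^ k| ≤ γ * φ ((k : ℝ)⁻¹)) →
      ∃ γ' > (0 : ℝ), ∀ k : ℕ, 1 ≤ k → ∀ lam : ℝ, 0 < lam → lam ≤ ‖adjoint A ∘L A‖ →
        ψ lam * |((μ₀ - lam) / (μ₀ + lam)) ^ k| ≤ γ' * ψ ((k : ℝ)⁻¹))
    ∧
    -- (ii)
    (∀ lbar : ℝ, 0 < lbar →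
      MonotoneOn (fun lam => φ lam / ψ lam) (Set.Ioc 0 lbar) →
      CoveredBy ‖adjoint A ∘L A‖ ψ φ)
    ∧
    -- (iii)
    (∀ lbar : ℝ, 0 < lbar → ConcaveOn ℝ (Set.Ioc 0 lbar) ψ →
      CoveredBy ‖adjoint A ∘L A‖ ψ (fun lam => lam)) := by
  obtain ⟨hφc, -, hφp, -⟩ := hφ
  obtain ⟨hψc, hψm, hψp, -⟩ := hψ
  refine ⟨fun hcov γ _ hqual => ?_, fun lbar hlbar hmono => ?_, fun lbar hlbar hconc => ?_⟩
  · exact hcov.qualification (g := fun k lam => ((μ₀ - lam) / (μ₀ + lam)) ^ k)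
      hφp hψp hψm.monotoneOn (fun k _ hlam _ => abs_sub_div_add_pow_le_one hμ₀ hlam.le k)
      hqual
  · exact coveredBy_of_monotoneOn_div hlbar
      (hφc.div hψc fun x hx => (hψp x hx).ne') (fun x hx => div_pos (hφp x hx) (hψp x hx))
      hmono
  · exact coveredBy_of_monotoneOn_div hlbar
      (continuousOn_id.div hψc fun x hx => (hψp x hx).ne') (fun x hx => div_pos hx (hψp x hx))
      (hconc.monotoneOn_div fun x hx => hψp x hx.1)
end
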